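/- For real x with |x| < 1, ∑_{n≥0} x^{2^n}/(1 + x^{2^n}) = (1 − x) · ∑_{n≥0} s₂(n) x^n, where s₂(n) is the binary digit sum of n. -/

import Mathlib

def s2 (n : ℕ) : ℕ := (Nat.digits 2 n).sum

lemma s2_two_mul (m : ℕ) : s2 (2 * m) = s2 m := by
  rcases Nat.eq_zero_or_pos m with h | h
  · simp [h, s2]
  · unfold s2
    rw [Nat.digits_def' (by norm_num : 1 < 2) (by omega)]
    simp [Nat.mul_div_cancel_left, Nat.mul_mod_right]

lemma s2_two_mul_add_one (m : ℕ) : s2 (2 * m + 1) = s2 m + 1 := by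
  unfold s2
  rw [Nat.digits_def' (by norm_num : 1 < 2) (by omega)]
  have h1 : (2 * m + 1) % 2 = 1 := by omega
  have h2 : (2 * m + 1) / 2 = m := by omega
  rw [List.sum_cons, h1, h2]
  omega

lemma s2_le (n : ℕ) : s2 n ≤ n := Nat.digit_sum_le 2 n

noncomputable def F (y : ℝ) : ℝ := ∑' n, (s2 n : ℝ) * y ^ n

noncomputable def G (y : ℝ) : ℝ := (1 - y) * F y

lemma summable_F {y : ℝ} (hy : |y| < 1) : Summable (fun n => (s2 n : ℝ) * y ^ n) := by
  apply Summable.of_norm_bounded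
    (summable_pow_mul_geometric_of_norm_lt_one 1 (by simpa using hy) : Summable fun n : ℕ => (n : ℝ) ^ 1 * |y| ^ n)
  intro n
  rw [norm_mul, norm_pow, pow_one, Real.norm_eq_abs, Real.norm_eq_abs, Nat.abs_cast]
  gcongr
  exact_mod_cast s2_le n

lemma abs_F_le {y : ℝ} (hy : |y| < 1) : |F y| ≤ |y| / (1 - |y|) ^ 2 := by
  have hs := summable_F hy
  have hsum : Summable (fun n : ℕ => (n : ℝ) * |y| ^ n) := by
    simpa using (summable_pow_mul_geometric_of_norm_lt_one 1 (by simpa using hy) :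
      Summable fun n : ℕ => (n : ℝ) ^ 1 * |y| ^ n)
  have h0 : ‖∑' n, (s2 n : ℝ) * y ^ n‖ ≤ ∑' n, ‖(s2 n : ℝ) * y ^ n‖ :=
    norm_tsum_le_tsum_norm hs.norm
  rw [Real.norm_eq_abs] at h0
  calc |F y| ≤ ∑' n, ‖(s2 n : ℝ) * y ^ n‖ := h0
    _ ≤ ∑' n : ℕ, (n : ℝ) * |y| ^ n := by
        apply Summable.tsum_le_tsum _ hs.norm hsum
        intro n
        rw [norm_mul, norm_pow, Real.norm_eq_abs, Real.norm_eq_abs, Nat.abs_cast]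
        gcongr
        exact_mod_cast s2_le n
    _ = |y| / (1 - |y|) ^ 2 := tsum_coe_mul_geometric_of_norm_lt_one (by simpa using hy)

lemma F_eq {y : ℝ} (hy : |y| < 1) : F y = (1 + y) * F (y ^ 2) + y / (1 - y ^ 2) := by
  have hy2 : |y ^ 2| < 1 := by
    rw [abs_pow]
    calc |y| ^ 2 ≤ |y| ^ 1 := pow_le_pow_of_le_one (abs_nonneg y) hy.le (by norm_num)
    _ = |y| := pow_one _
    _ < 1 := hy
  have hF2 : Summable (fun n => (s2 n : ℝ) * (y ^ 2) ^ n) := summable_F hy2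
  have hgeo : Summable (fun n : ℕ => (y ^ 2) ^ n) :=
    summable_geometric_of_norm_lt_one (by simpa using hy2)
  have heven : Summable (fun m => (s2 (2 * m) : ℝ) * y ^ (2 * m)) := by
    apply hF2.congr
    intro m
    rw [s2_two_mul, ← pow_mul]
  have hodd : Summable (fun m => (s2 (2 * m + 1) : ℝ) * y ^ (2 * m + 1)) := by
    apply ((hF2.add hgeo).mul_right y).congr
    intro m
    rw [s2_two_mul_add_one, pow_succ y (2 * m), pow_mul]
    push_cast
    ring
  have key := tsum_even_add_odd (f := fun n => (s2 n : ℝ) * y ^ n) heven hodd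
  have heven_eq : (∑' m, (s2 (2 * m) : ℝ) * y ^ (2 * m)) = F (y ^ 2) := by
    apply tsum_congr
    intro m
    rw [s2_two_mul, ← pow_mul]
  have hodd_eq : (∑' m, (s2 (2 * m + 1) : ℝ) * y ^ (2 * m + 1)) =
      y * F (y ^ 2) + y / (1 - y ^ 2) := by
    have : (∑' m, (s2 (2 * m + 1) : ℝ) * y ^ (2 * m + 1)) =
        ∑' m, ((s2 m : ℝ) * (y ^ 2) ^ m + (y ^ 2) ^ m) * y := by
      apply tsum_congr
      intro m
      rw [s2_two_mul_add_one, pow_succ y (2 * m), pow_mul]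
      push_cast
      ring
    rw [this, tsum_mul_right, Summable.tsum_add hF2 hgeo,
      tsum_geometric_of_norm_lt_one (by simpa using hy2)]
    have h1 : (1 : ℝ) - y ^ 2 ≠ 0 := by nlinarith [abs_nonneg y, sq_abs y]
    unfold F
    field_simp
  rw [show F y = ∑' n, (s2 n : ℝ) * y ^ n from rfl, ← key, heven_eq, hodd_eq]
  ring

lemma G_eq {y : ℝ} (hy : |y| < 1) : G y = G (y ^ 2) + y / (1 + y) := by
  have h1 : (1 : ℝ) - y > 0 := by cases abs_lt.mp hy; linarith
  have h2 : (1 : ℝ) + y > 0 := by cases abs_lt.mp hy; linarith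
  have h1' : (1 : ℝ) - y ≠ 0 := ne_of_gt h1
  have h2' : (1 : ℝ) + y ≠ 0 := ne_of_gt h2
  have h3 : (1 : ℝ) - y ^ 2 ≠ 0 := by
    intro h; apply h1'; nlinarith
  unfold G
  rw [F_eq hy]
  field_simp
  ring

lemma abs_pow_two_pow_lt {x : ℝ} (hx : |x| < 1) (N : ℕ) : |x ^ 2 ^ N| < 1 := by
  rw [abs_pow]
  calc |x| ^ 2 ^ N ≤ |x| ^ 1 :=
        pow_le_pow_of_le_one (abs_nonneg x) hx.le (Nat.one_le_two_pow)
    _ = |x| := pow_one _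
    _ < 1 := hx

lemma telescope {x : ℝ} (hx : |x| < 1) (N : ℕ) :
    G x = (∑ n ∈ Finset.range N, x ^ 2 ^ n / (1 + x ^ 2 ^ n)) + G (x ^ 2 ^ N) := by
  induction N with
  | zero => simp
  | succ N ih =>
    rw [Finset.sum_range_succ, ih, G_eq (abs_pow_two_pow_lt hx N), ← pow_mul,
      ← pow_succ]
    ring

lemma summable_lhs {x : ℝ} (hx : |x| < 1) :
    Summable (fun n : ℕ => x ^ 2 ^ n / (1 + x ^ 2 ^ n)) := by
  have h1 : (0:ℝ) < 1 - |x| := by linarith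
  apply Summable.of_norm_bounded
    ((summable_geometric_of_lt_one (abs_nonneg x) hx).div_const (1 - |x|))
  intro n
  rw [Real.norm_eq_abs, abs_div]
  have hb : |x ^ 2 ^ n| ≤ |x| ^ n := by
    rw [abs_pow]
    exact pow_le_pow_of_le_one (abs_nonneg x) hx.le Nat.lt_two_pow_self.le
  have hden : 1 - |x| ≤ |1 + x ^ 2 ^ n| := by
    have h2 : |x ^ 2 ^ n| ≤ |x| := by
      rw [abs_pow]
      calc |x| ^ 2 ^ n ≤ |x| ^ 1 :=
            pow_le_pow_of_le_one (abs_nonneg x) hx.le Nat.one_le_two_pow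
        _ = |x| := pow_one _
    calc 1 - |x| ≤ 1 - |x ^ 2 ^ n| := by linarith
      _ ≤ 1 + x ^ 2 ^ n := by linarith [neg_abs_le (x ^ 2 ^ n)]
      _ ≤ |1 + x ^ 2 ^ n| := le_abs_self _
  apply div_le_div₀ (pow_nonneg (abs_nonneg x) n) hb h1 hden

lemma G_tendsto {x : ℝ} (hx : |x| < 1) :
    Filter.Tendsto (fun N => G (x ^ 2 ^ N)) Filter.atTop (nhds 0) := by
  have hr : Filter.Tendsto (fun N : ℕ => |x| ^ 2 ^ N) Filter.atTop (nhds 0) := by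
    exact (tendsto_pow_atTop_nhds_zero_of_lt_one (abs_nonneg x) hx).comp
      (tendsto_pow_atTop_atTop_of_one_lt (by norm_num))
  rw [tendsto_zero_iff_norm_tendsto_zero]
  apply squeeze_zero (fun N => norm_nonneg _)
    (g := fun N => 2 * (|x| ^ 2 ^ N / (1 - |x| ^ 2 ^ N) ^ 2))
  · intro N
    have hN : |x ^ 2 ^ N| < 1 := abs_pow_two_pow_lt hx N
    have hF := abs_F_le hN
    rw [Real.norm_eq_abs]
    unfold G
    rw [abs_mul]
    have h1 : |1 - x ^ 2 ^ N| ≤ 2 := by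
      cases abs_lt.mp hN with
      | intro hl hr => rw [abs_le]; constructor <;> linarith
    calc |1 - x ^ 2 ^ N| * |F (x ^ 2 ^ N)| ≤ 2 * (|x ^ 2 ^ N| / (1 - |x ^ 2 ^ N|) ^ 2) := by
          apply mul_le_mul h1 hF (abs_nonneg _) (by norm_num)
      _ = 2 * (|x| ^ 2 ^ N / (1 - |x| ^ 2 ^ N) ^ 2) := by rw [abs_pow]
  · have : Filter.Tendsto (fun r : ℝ => 2 * (r / (1 - r) ^ 2)) (nhds 0) (nhds 0) := by
      have : ContinuousAt (fun r : ℝ => 2 * (r / (1 - r) ^ 2)) 0 := by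
        apply ContinuousAt.mul continuousAt_const
        apply ContinuousAt.div continuousAt_id (by fun_prop)
        norm_num
      simpa using this.tendsto
    exact this.comp hr

theorem stmt9 : ∀ x : ℝ, |x| < 1 →
    ∑' n : ℕ, x ^ (2 ^ n) / (1 + x ^ (2 ^ n)) =
      (1 - x) * ∑' n : ℕ, (s2 n : ℝ) * x ^ n := by
  intro x hx
  have hsum := summable_lhs hx
  have h1 : Filter.Tendsto (fun N => ∑ n ∈ Finset.range N, x ^ 2 ^ n / (1 + x ^ 2 ^ n))
      Filter.atTop (nhds (∑' n : ℕ, x ^ 2 ^ n / (1 + x ^ 2 ^ n))) :=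
    hsum.hasSum.tendsto_sum_nat
  have h2 : Filter.Tendsto (fun N => ∑ n ∈ Finset.range N, x ^ 2 ^ n / (1 + x ^ 2 ^ n))
      Filter.atTop (nhds (G x)) := by
    have : (fun N => ∑ n ∈ Finset.range N, x ^ 2 ^ n / (1 + x ^ 2 ^ n)) =
        fun N => G x - G (x ^ 2 ^ N) := by
      funext N
      have := telescope hx N
      linarith
    rw [this]
    simpa using tendsto_const_nhds.sub (G_tendsto hx)
  have := tendsto_nhds_unique h1 h2
  rw [this]
  rfl
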